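/- For any two PDESs H1 and H2 over the same event set Σ, the probabilistic language generated by their product equals the intersection of their generated probabilistic languages: L_{H1 × H2} = L_{H1} ∩ L_{H2}. -/

import Mathlib

open scoped BigOperators

noncomputable section

/-- Chain product: given step weights `w s σ` (interpreted as the conditional
probability of event `σ` after string `s`), `chainProd w pre rest` multiplies the
weights along `rest`, starting from the already-consumed prefix `pre`. -/
def chainProd {E : Type*} (w : List E → E → ℝ) : List E → List E → ℝ
  | _, [] => 1
  | pre, σ :: rest => w pre σ * chainProd w (pre ++ [σ]) rest

/-- The (probabilistic) language generated by step weights `w`: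
`langOf w [] = 1` and `langOf w (s ++ [σ]) = langOf w s * w s σ`. -/
def langOf {E : Type*} (w : List E → E → ℝ) : List E → ℝ := chainProd w []

/-- A probabilistic language over a finite event set `E`. -/
structure PLang (E : Type*) [Fintype E] where
  toFun : List E → ℝ
  nonneg : ∀ s, 0 ≤ toFun s
  le_one : ∀ s, toFun s ≤ 1
  eps : toFun [] = 1
  step : ∀ s, (∑ σ : E, toFun (s ++ [σ])) ≤ toFun s

/-- `L1` is a probabilistic sublanguage of `L2`. -/
def PSub {E : Type*} (L1 L2 : List E → ℝ) : Prop :=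
  (∀ s, 0 < L1 s → 0 < L2 s) ∧
  ∀ s, 0 < L1 s → ∀ σ : E, L1 (s ++ [σ]) / L1 s ≤ L2 (s ++ [σ]) / L2 s

/-- Intersection of probabilistic languages. -/
def pInter {E : Type*} (L1 L2 : List E → ℝ) : List E → ℝ :=
  langOf fun s σ => min (L1 (s ++ [σ]) / L1 s) (L2 (s ++ [σ]) / L2 s)

/-- Natural projection erasing the events outside the observable set `So`. -/
def proj {E : Type*} [DecidableEq E] (So : Finset E) (s : List E) : List E :=
  s.filter fun σ => decide (σ ∈ So)

/-- A probabilistic discrete event system (probabilistic automaton). -/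
structure PDES (X : Type*) (E : Type*) [Fintype E] where
  x0 : X
  trans : X → E → Option X
  prob : X → E → ℝ
  prob_nonneg : ∀ x σ, 0 ≤ prob x σ
  prob_le_one : ∀ x σ, prob x σ ≤ 1
  prob_pos_iff : ∀ x σ, 0 < prob x σ ↔ (trans x σ).isSome
  sum_le_one : ∀ x, (∑ σ : E, prob x σ) ≤ 1

/-- Extension of the partial transition function to strings. -/
def PDES.transStar {X E : Type*} [Fintype E] (G : PDES X E) (s : List E) : Option X :=
  s.foldl (fun ox σ => ox.bind fun x => G.trans x σ) (some G.x0)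

/-- Step weight of a PDES: `ρ(δ(x0,s),σ)` when `δ(x0,s)` is defined, `0` otherwise. -/
def PDES.w {X E : Type*} [Fintype E] (G : PDES X E) (s : List E) (σ : E) : ℝ :=
  (G.transStar s).elim 0 fun x => G.prob x σ

/-- The probabilistic language generated by a PDES. -/
def PDES.lang {X E : Type*} [Fintype E] (G : PDES X E) : List E → ℝ := langOf G.w

/-- The set of control patterns: subsets of events containing every uncontrollable event. -/
def ControlPatterns {E : Type*} [Fintype E] [DecidableEq E] (Sc : Finset E) :
    Finset (Finset E) :=
  Finset.univ.filter fun θ => Scᶜ ⊆ θ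

/-- `Sp` is a probabilistic P-supervisor for `G`: to every observation of a string in the
support of `L_G` it assigns a probability distribution on the control patterns. -/
def IsSupervisor {X E : Type*} [Fintype E] [DecidableEq E] (G : PDES X E)
    (Sc So : Finset E) (Sp : List E → Finset E → ℝ) : Prop :=
  ∀ s : List E, 0 < G.lang s →
    (∀ θ ∈ ControlPatterns Sc, 0 ≤ Sp (proj So s) θ) ∧
    (∑ θ ∈ ControlPatterns Sc, Sp (proj So s) θ) = 1

/-- The controlled probabilistic language `L_{Sp/G}`. -/
def supLang {X E : Type*} [Fintype E] [DecidableEq E] (G : PDES X E)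
    (Sc So : Finset E) (Sp : List E → Finset E → ℝ) : List E → ℝ :=
  langOf fun s σ =>
    G.w s σ * ∑ θ ∈ (ControlPatterns Sc).filter (fun θ => σ ∈ θ), Sp (proj So s) θ

/-- `K` is a scaling-factor function for `G`: on every observation of a string in the
support of `L_G` it takes values in `[0,1]` and equals `1` on uncontrollable events. -/
def IsScaling {X E : Type*} [Fintype E] [DecidableEq E] (G : PDES X E)
    (Sc So : Finset E) (K : List E → E → ℝ) : Prop :=
  ∀ s : List E, 0 < G.lang s → ∀ σ : E,
    0 ≤ K (proj So s) σ ∧ K (proj So s) σ ≤ 1 ∧ (σ ∉ Sc → K (proj So s) σ = 1)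

/-- The controlled probabilistic language `L_{K/G}`. -/
def kLang {X E : Type*} [Fintype E] [DecidableEq E] (G : PDES X E)
    (So : Finset E) (K : List E → E → ℝ) : List E → ℝ :=
  langOf fun s σ => G.w s σ * K (proj So s) σ

/-- Probabilistic controllability (language form). -/
def ProbControllable {E : Type*} (L M : List E → ℝ) (Sc : Finset E) : Prop :=
  ∀ s : List E, 0 < L s → ∀ σ : E, σ ∉ Sc →
    L (s ++ [σ]) / L s = M (s ++ [σ]) / M s

/-- Probabilistic observability (language form). -/
def ProbObservable {E : Type*} [DecidableEq E] (L M : List E → ℝ)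
    (Sc So : Finset E) : Prop :=
  ∀ s1 s2 : List E, 0 < L s1 → 0 < L s2 → proj So s1 = proj So s2 →
    ∀ σ ∈ Sc,
      (M (s1 ++ [σ]) / M s1) * (L (s2 ++ [σ]) / L s2) =
      (M (s2 ++ [σ]) / M s2) * (L (s1 ++ [σ]) / L s1)

/-- Probabilistic controllability (automata form). -/
def AutControllable {X Q E : Type*} [Fintype E] (G : PDES X E) (H : PDES Q E)
    (Sc : Finset E) : Prop :=
  ∀ s : List E, 0 < H.lang s → ∀ x q,
    G.transStar s = some x → H.transStar s = some q →
    ∀ σ : E, σ ∉ Sc → H.prob q σ = G.prob x σ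

/-- Probabilistic observability (automata form). -/
def AutObservable {X Q E : Type*} [Fintype E] [DecidableEq E] (G : PDES X E)
    (H : PDES Q E) (Sc So : Finset E) : Prop :=
  ∀ s1 s2 : List E, 0 < H.lang s1 → 0 < H.lang s2 → proj So s1 = proj So s2 →
    ∀ x1 q1 x2 q2,
      G.transStar s1 = some x1 → H.transStar s1 = some q1 →
      G.transStar s2 = some x2 → H.transStar s2 = some q2 →
      ∀ σ ∈ Sc, G.prob x1 σ * H.prob q2 σ = G.prob x2 σ * H.prob q1 σ

/-- Reachability in the controllability-testing automaton `G_tc`.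
States are pairs `(x,q)` (as `Sum.inl`) together with the special state `d` (`Sum.inr ()`). -/
inductive TcReach {X Q E : Type*} [Fintype E] (G : PDES X E) (H : PDES Q E)
    (Sc : Finset E) : (X × Q) ⊕ Unit → Prop
  | init : TcReach G H Sc (Sum.inl (G.x0, H.x0))
  | good (x q x' q' σ) : TcReach G H Sc (Sum.inl (x, q)) →
      G.trans x σ = some x' → H.trans q σ = some q' →
      ((σ ∉ Sc ∧ G.prob x σ = H.prob q σ) ∨ σ ∈ Sc) →
      TcReach G H Sc (Sum.inl (x', q'))
  | bad (x q σ) : TcReach G H Sc (Sum.inl (x, q)) →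
      σ ∉ Sc → G.prob x σ ≠ H.prob q σ →
      TcReach G H Sc (Sum.inr ())

/-- Reachability in the observability-testing automaton `G_to`.
States are 4-tuples `(x1,q1,x2,q2)` (as `Sum.inl`) together with the special state `d`. -/
inductive ToReach {X Q E : Type*} [Fintype E] (G : PDES X E) (H : PDES Q E)
    (Sc So : Finset E) : (X × Q × X × Q) ⊕ Unit → Prop
  | init : ToReach G H Sc So (Sum.inl (G.x0, H.x0, G.x0, H.x0))
  | sync (x1 q1 x2 q2 x1' q1' x2' q2' σ) :
      ToReach G H Sc So (Sum.inl (x1, q1, x2, q2)) →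
      G.trans x1 σ = some x1' → H.trans q1 σ = some q1' →
      G.trans x2 σ = some x2' → H.trans q2 σ = some q2' →
      (σ ∉ Sc ∨ (σ ∈ Sc ∧ G.prob x1 σ * H.prob q2 σ = G.prob x2 σ * H.prob q1 σ)) →
      ToReach G H Sc So (Sum.inl (x1', q1', x2', q2'))
  | bad (x1 q1 x2 q2 σ) :
      ToReach G H Sc So (Sum.inl (x1, q1, x2, q2)) →
      σ ∈ Sc → G.prob x1 σ * H.prob q2 σ ≠ G.prob x2 σ * H.prob q1 σ →
      ToReach G H Sc So (Sum.inr ())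
  | left (x1 q1 x2 q2 x1' q1' σ) :
      ToReach G H Sc So (Sum.inl (x1, q1, x2, q2)) → σ ∉ So →
      G.trans x1 σ = some x1' → H.trans q1 σ = some q1' →
      ToReach G H Sc So (Sum.inl (x1', q1', x2, q2))
  | right (x1 q1 x2 q2 x2' q2' σ) :
      ToReach G H Sc So (Sum.inl (x1, q1, x2, q2)) → σ ∉ So →
      G.trans x2 σ = some x2' → H.trans q2 σ = some q2' →
      ToReach G H Sc So (Sum.inl (x1, q1, x2', q2'))

/-- `H` is a probabilistic subautomaton of `G`, as witnessed by the state inclusion `e`. -/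
def SubautomatonVia {Q X E : Type*} [Fintype E] (H : PDES Q E) (G : PDES X E)
    (e : Q → X) : Prop :=
  Function.Injective e ∧ e H.x0 = G.x0 ∧
  ∀ q σ, H.prob q σ ≤ G.prob (e q) σ ∧
    ∀ q', H.trans q σ = some q' → G.trans (e q) σ = some (e q')

/-- The product of two PDESs. -/
def PDES.prod {X Q E : Type*} [Fintype E] (G : PDES X E) (H : PDES Q E) :
    PDES (X × Q) E where
  x0 := (G.x0, H.x0)
  trans := fun p σ => (G.trans p.1 σ).bind fun x => (H.trans p.2 σ).map fun q => (x, q)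
  prob := fun p σ => min (G.prob p.1 σ) (H.prob p.2 σ)
  prob_nonneg := fun p σ => le_min (G.prob_nonneg _ _) (H.prob_nonneg _ _)
  prob_le_one := fun p σ => le_trans (min_le_left _ _) (G.prob_le_one _ _)
  prob_pos_iff := by
    intro p σ
    rw [lt_min_iff, G.prob_pos_iff, H.prob_pos_iff]
    cases hG : G.trans p.1 σ <;> cases hH : H.trans p.2 σ <;> simp [hG, hH]
  sum_le_one := fun p =>
    le_trans (Finset.sum_le_sum fun σ _ => min_le_left _ _) (G.sum_le_one p.1)

end

/-!
Both sides are chain products of step weights. The product automaton reaches a state after `s`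
exactly when both factors do, so its step weight is the minimum of theirs. On the support of
`L = langOf w` the ratio `L (s ++ [σ]) / L s` is the step weight `w s σ`, and the support of
the product language lies in the supports of both factors; so the two chain products agree
factor by factor until both vanish.
-/

section LangOf

variable {E : Type*}

theorem chainProd_append_singleton (w : List E → E → ℝ) (σ : E) (rest pre : List E) :
    chainProd w pre (rest ++ [σ]) = chainProd w pre rest * w (pre ++ rest) σ := by
  induction rest generalizing pre with
  | nil => simp [chainProd]
  | cons τ rest ih =>
    rw [List.cons_append, chainProd, chainProd, ih, List.append_assoc, mul_assoc,
      List.singleton_append]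

theorem langOf_append_singleton (w : List E → E → ℝ) (s : List E) (σ : E) :
    langOf w (s ++ [σ]) = langOf w s * w s σ :=
  chainProd_append_singleton w σ s []

theorem langOf_nonneg {w : List E → E → ℝ} (hw : ∀ s σ, 0 ≤ w s σ) (s : List E) :
    0 ≤ langOf w s := by
  induction s using List.reverseRecOn with
  | nil => exact zero_le_one
  | append_singleton s σ ih =>
    rw [langOf_append_singleton]
    exact mul_nonneg ih (hw s σ)

theorem langOf_mono {w w' : List E → E → ℝ} (hw : ∀ s σ, 0 ≤ w s σ)
    (hle : ∀ s σ, w s σ ≤ w' s σ) (s : List E) : langOf w s ≤ langOf w' s := by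
  induction s using List.reverseRecOn with
  | nil => exact le_rfl
  | append_singleton s σ ih =>
    rw [langOf_append_singleton, langOf_append_singleton]
    exact mul_le_mul ih (hle s σ) (hw s σ) ((langOf_nonneg hw s).trans ih)

theorem langOf_append_singleton_div {w : List E → E → ℝ} {s : List E}
    (hs : langOf w s ≠ 0) (σ : E) : langOf w (s ++ [σ]) / langOf w s = w s σ := by
  rw [langOf_append_singleton, mul_div_cancel_left₀ _ hs]

theorem langOf_congr {w w' : List E → E → ℝ}
    (h : ∀ s σ, langOf w s ≠ 0 → w s σ = w' s σ) : langOf w = langOf w' := by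
  funext s
  induction s using List.reverseRecOn with
  | nil => rfl
  | append_singleton s σ ih =>
    rw [langOf_append_singleton, langOf_append_singleton, ← ih]
    by_cases hs : langOf w s = 0
    · rw [hs, zero_mul, zero_mul]
    · rw [h s σ hs]

end LangOf

namespace PDES

variable {X Q E : Type*} [Fintype E]

theorem transStar_append_singleton (G : PDES X E) (s : List E) (σ : E) :
    G.transStar (s ++ [σ]) = (G.transStar s).bind fun x => G.trans x σ := by
  simp only [transStar, List.foldl_append, List.foldl_cons, List.foldl_nil]

theorem w_nonneg (G : PDES X E) (s : List E) (σ : E) : 0 ≤ G.w s σ := by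
  unfold w
  cases G.transStar s with
  | none => exact le_rfl
  | some x => exact G.prob_nonneg x σ

theorem lang_nonneg (G : PDES X E) (s : List E) : 0 ≤ G.lang s :=
  langOf_nonneg G.w_nonneg s

theorem prod_transStar (G : PDES X E) (H : PDES Q E) (s : List E) :
    (G.prod H).transStar s =
      (G.transStar s).bind fun x => (H.transStar s).map fun q => (x, q) := by
  induction s using List.reverseRecOn with
  | nil => rfl
  | append_singleton s σ ih =>
    simp only [transStar_append_singleton, ih]
    cases G.transStar s with
    | none => rfl
    | some x =>
      cases H.transStar s with
      | none => simp
      | some q => rfl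

theorem prod_w (G : PDES X E) (H : PDES Q E) (s : List E) (σ : E) :
    (G.prod H).w s σ = min (G.w s σ) (H.w s σ) := by
  unfold w
  rw [prod_transStar]
  cases G.transStar s with
  | none => exact (min_eq_left (H.w_nonneg s σ)).symm
  | some x =>
    cases H.transStar s with
    | none => exact (min_eq_right (G.prob_nonneg x σ)).symm
    | some q => rfl

theorem prod_lang_le_left (G : PDES X E) (H : PDES Q E) (s : List E) :
    (G.prod H).lang s ≤ G.lang s :=
  langOf_mono (G.prod H).w_nonneg (fun s σ => (prod_w G H s σ).trans_le (min_le_left _ _)) s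

theorem prod_lang_le_right (G : PDES X E) (H : PDES Q E) (s : List E) :
    (G.prod H).lang s ≤ H.lang s :=
  langOf_mono (G.prod H).w_nonneg (fun s σ => (prod_w G H s σ).trans_le (min_le_right _ _)) s

end PDES

/-- the language of a product PDES is the intersection of the languages. -/
theorem prod_lang_eq_pInter {X Q E : Type*} [Fintype E]
    (G : PDES X E) (H : PDES Q E) :
    (G.prod H).lang = pInter G.lang H.lang := by
  refine langOf_congr fun s σ hs => ?_
  have hpos : 0 < (G.prod H).lang s := ((G.prod H).lang_nonneg s).lt_of_ne' hs
  have hG : G.lang s ≠ 0 := (hpos.trans_le (PDES.prod_lang_le_left G H s)).ne'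
  have hH : H.lang s ≠ 0 := (hpos.trans_le (PDES.prod_lang_le_right G H s)).ne'
  rw [PDES.prod_w, PDES.lang, PDES.lang, langOf_append_singleton_div hG,
    langOf_append_singleton_div hH]
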